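/- For all a ∈ ℕ and all t ≥ a+1, the discounted sum of modified temporal-difference errors telescopes to the interim λ-weighted synthetic gradient: Σ_{b=a}^{t−1} (γλ)^{b−a} δ'_{a,b} = G_a^{λ|t} − u_a. -/

import Mathlib

/-! Successive n-step gradients differ by a single discounted TD error,
`G_a^{(n+1)} = G_a^{(n)} + γ^n δ'_{a,a+n}`, and `G_a^{(0)} = u_a`. Any λ-mixture of a sequence with
such increments equals its start plus the increments reweighted by `(γλ)^k`, since the weights
`(1-λ)λ^{n-1}` of the mixture that lie beyond `k` sum to `λ^k`. -/

open Finset Matrix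

noncomputable section

/-- Propagator `Pfrom J a n = P(a+n, a) = J_{a+n-1} ⋯ J_a`. -/
def Pfrom {d : ℕ} (J : ℕ → Matrix (Fin d) (Fin d) ℝ) (a : ℕ) : ℕ → Matrix (Fin d) (Fin d) ℝ
  | 0 => 1
  | n + 1 => J (a + n) * Pfrom J a n

/-- Propagator `P J b a = P(b, a) = J_{b-1} ⋯ J_a` (for `b ≥ a`). -/
def P {d : ℕ} (J : ℕ → Matrix (Fin d) (Fin d) ℝ) (b a : ℕ) : Matrix (Fin d) (Fin d) ℝ :=
  Pfrom J a (b - a)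

/-- The n-step synthetic gradient `G_a^{(n)}`. -/
def Gn {d : ℕ} (γ : ℝ) (J : ℕ → Matrix (Fin d) (Fin d) ℝ) (c u : ℕ → Fin d → ℝ)
    (a n : ℕ) : Fin d → ℝ :=
  (∑ k ∈ Finset.range n, γ ^ k • Matrix.vecMul (c (a + k + 1)) (P J (a + k + 1) a))
    + γ ^ n • Matrix.vecMul (u (a + n)) (P J (a + n) a)

/-- The interim λ-weighted synthetic gradient `G_a^{λ|H}`. -/
def GLam {d : ℕ} (γ lam : ℝ) (J : ℕ → Matrix (Fin d) (Fin d) ℝ) (c u : ℕ → Fin d → ℝ)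
    (a H : ℕ) : Fin d → ℝ :=
  (1 - lam) • (∑ n ∈ Finset.range (H - a - 1), lam ^ n • Gn γ J c u a (n + 1))
    + lam ^ (H - a - 1) • Gn γ J c u a (H - a)

/-- The modified temporal-difference error `δ'_{a,t}`. -/
def δ' {d : ℕ} (γ : ℝ) (J : ℕ → Matrix (Fin d) (Fin d) ℝ) (c u : ℕ → Fin d → ℝ)
    (a t : ℕ) : Fin d → ℝ :=
  Matrix.vecMul (c (t + 1) + γ • u (t + 1)) (P J (t + 1) a) - Matrix.vecMul (u t) (P J t a)

/-- The temporal-difference error `δ_t`. -/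
def δtd {d : ℕ} (γ : ℝ) (J : ℕ → Matrix (Fin d) (Fin d) ℝ) (c u w : ℕ → Fin d → ℝ)
    (t : ℕ) : Fin d → ℝ :=
  Matrix.vecMul (c (t + 1) + γ • u (t + 1)) (P J (t + 1) t) - w t

/-- `δ_{a,t} = δ_t P(t,a)`. -/
def δab {d : ℕ} (γ : ℝ) (J : ℕ → Matrix (Fin d) (Fin d) ℝ) (c u w : ℕ → Fin d → ℝ)
    (a t : ℕ) : Fin d → ℝ :=
  Matrix.vecMul (δtd γ J c u w t) (P J t a)

theorem lambdaMixture_eq_add_sum {R M : Type*} [CommRing R] [AddCommGroup M] [Module R M]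
    (γ lam : R) (G e : ℕ → M) (hG : ∀ n, G (n + 1) = G n + γ ^ n • e n) (m : ℕ) :
    (1 - lam) • (∑ n ∈ range m, lam ^ n • G (n + 1)) + lam ^ m • G (m + 1)
      = G 0 + ∑ k ∈ range (m + 1), (γ * lam) ^ k • e k := by
  induction m with
  | zero => simp [hG 0]
  | succ m ih =>
    rw [sum_range_succ, hG (m + 1), sum_range_succ _ (m + 1), ← add_assoc, ← ih]
    module

theorem Gn_zero {d : ℕ} (γ : ℝ) (J : ℕ → Matrix (Fin d) (Fin d) ℝ) (c u : ℕ → Fin d → ℝ)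
    (a : ℕ) : Gn γ J c u a 0 = u a := by
  simp [Gn, P, Pfrom]

theorem Gn_succ {d : ℕ} (γ : ℝ) (J : ℕ → Matrix (Fin d) (Fin d) ℝ) (c u : ℕ → Fin d → ℝ)
    (a n : ℕ) : Gn γ J c u a (n + 1) = Gn γ J c u a n + γ ^ n • δ' γ J c u a (a + n) := by
  rw [Gn, Gn, δ', sum_range_succ, add_vecMul, smul_vecMul, ← add_assoc a n 1]
  module

theorem GLam_add_one {d : ℕ} (γ lam : ℝ) (J : ℕ → Matrix (Fin d) (Fin d) ℝ)
    (c u : ℕ → Fin d → ℝ) (a m : ℕ) :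
    GLam γ lam J c u a (a + m + 1)
      = (1 - lam) • (∑ n ∈ range m, lam ^ n • Gn γ J c u a (n + 1))
        + lam ^ m • Gn γ J c u a (m + 1) := by
  rw [GLam, show a + m + 1 - a - 1 = m by omega, show a + m + 1 - a = m + 1 by omega]

theorem discounted_td_telescopes_general {d : ℕ} (γ lam : ℝ)
    (J : ℕ → Matrix (Fin d) (Fin d) ℝ) (c u : ℕ → Fin d → ℝ)
    (a t : ℕ) (h : a + 1 ≤ t) :
    ∑ b ∈ Finset.Icc a (t - 1), (γ * lam) ^ (b - a) • δ' γ J c u a b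
      = GLam γ lam J c u a t - u a := by
  obtain ⟨m, rfl⟩ := Nat.exists_eq_add_of_le h
  have hIcc : Icc a (a + 1 + m - 1) = Ico a (a + (m + 1)) := by
    rw [← Ico_add_one_right_eq_Icc]; congr 1; omega
  rw [hIcc, sum_Ico_eq_sum_range, add_tsub_cancel_left, add_right_comm, GLam_add_one,
    lambdaMixture_eq_add_sum γ lam _ _ (Gn_succ γ J c u a), Gn_zero]
  simp only [add_tsub_cancel_left]

/-- the discounted sum of modified temporal-difference errors
telescopes to the interim λ-weighted synthetic gradient:
`Σ_{b=a}^{t−1} (γλ)^{b−a} δ'_{a,b} = G_a^{λ|t} − u_a`. -/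
theorem discounted_td_telescopes {d : ℕ} (γ lam : ℝ)
    (J : ℕ → Matrix (Fin d) (Fin d) ℝ) (c u w : ℕ → Fin d → ℝ)
    (a t : ℕ) (h : a + 1 ≤ t) :
    ∑ b ∈ Finset.Icc a (t - 1), (γ * lam) ^ (b - a) • δ' γ J c u a b
      = GLam γ lam J c u a t - u a :=
  discounted_td_telescopes_general γ lam J c u a t h
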